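/- For any vertex u of a graph G, γ_g(G|u) ≥ γ_g(G) − 2. Moreover, if G is a no-minus graph, then γ_g(G|u) ≥ γ_g(G) − 1. -/

import Mathlib

open Finset

namespace DomGame

open scoped Classical

noncomputable section

variable {V : Type*}

/-- The closed neighborhood of `x` in `G`, as a `Finset`. -/
def closedNbr (G : SimpleGraph V) [Fintype V] (x : V) : Finset V :=
  Finset.univ.filter (fun y => y = x ∨ G.Adj x y)

lemma card_compl_lt (G : SimpleGraph V) [Fintype V] {S : Finset V} {x : V}
    (h : ¬ closedNbr G x ⊆ S) :
    (Finset.univ \ (S ∪ closedNbr G x)).card < (Finset.univ \ S).card := by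
  obtain ⟨v, hvN, hvS⟩ := Finset.not_subset.mp h
  apply Finset.card_lt_card
  have hsub : Finset.univ \ (S ∪ closedNbr G x) ⊆ Finset.univ \ S := by
    intro y hy
    simp only [Finset.mem_sdiff, Finset.mem_univ, Finset.mem_union, true_and, not_or] at hy ⊢
    exact hy.1
  exact (Finset.ssubset_iff_of_subset hsub).mpr ⟨v, by simp [hvS], by simp [hvN]⟩

/-- The value of the (partially dominated) domination game on `G|S`, with
`dom = true` meaning Dominator moves next, `dom = false` meaning Staller moves next.
A legal move is a vertex whose closed neighborhood contains a yet undominated vertex;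
Dominator minimizes, Staller maximizes the total number of moves. -/
def gameVal (G : SimpleGraph V) [Fintype V] (dom : Bool) (S : Finset V) : ℕ :=
  let moves := Finset.univ.filter (fun x => ¬ closedNbr G x ⊆ S)
  if h : moves.Nonempty then
    if dom then
      moves.attach.inf' (by simpa using h)
        (fun x => 1 + gameVal G false (S ∪ closedNbr G x.1))
    else
      moves.attach.sup' (by simpa using h)
        (fun x => 1 + gameVal G true (S ∪ closedNbr G x.1))
  else 0
termination_by (Finset.univ \ S).card
decreasing_by
  · exact card_compl_lt G (by simpa using (Finset.mem_filter.mp x.2).2)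
  · exact card_compl_lt G (by simpa using (Finset.mem_filter.mp x.2).2)

/-- The D-game domination number `γ_g(G)`. -/
def gammaD (G : SimpleGraph V) [Fintype V] : ℕ := gameVal G true ∅

/-- The S-game domination number `γ_g'(G)`. -/
def gammaS (G : SimpleGraph V) [Fintype V] : ℕ := gameVal G false ∅

/-- Value of the Staller-pass domination game on `G|S`: Staller may skip
(at most) one move during the game; the skipped turn is not counted.
`dom` tells whose turn it is, `canPass` whether Staller's pass is still available. -/
def spVal (G : SimpleGraph V) [Fintype V] (dom : Bool) (canPass : Bool) (S : Finset V) : ℕ :=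
  let moves := Finset.univ.filter (fun x => ¬ closedNbr G x ⊆ S)
  if h : moves.Nonempty then
    if dom then
      moves.attach.inf' (by simpa using h)
        (fun x => 1 + spVal G false canPass (S ∪ closedNbr G x.1))
    else
      if hc : canPass then
        max (moves.attach.sup' (by simpa using h)
              (fun x => 1 + spVal G true canPass (S ∪ closedNbr G x.1)))
            (spVal G true false S)
      else
        moves.attach.sup' (by simpa using h)
          (fun x => 1 + spVal G true canPass (S ∪ closedNbr G x.1))
  else 0
termination_by ((Finset.univ \ S).card, if canPass then 1 else 0)
decreasing_by
  · exact Prod.Lex.left _ _ (card_compl_lt G (by simpa using (Finset.mem_filter.mp x.2).2))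
  · exact Prod.Lex.left _ _ (card_compl_lt G (by simpa using (Finset.mem_filter.mp x.2).2))
  · simp only [hc, if_true]
    exact Prod.Lex.right _ (by norm_num)
  · exact Prod.Lex.left _ _ (card_compl_lt G (by simpa using (Finset.mem_filter.mp x.2).2))

/-- Value of the Dominator-pass domination game on `G|S`: Dominator may skip
(at most) one move during the game; the skipped turn is not counted. -/
def dpVal (G : SimpleGraph V) [Fintype V] (dom : Bool) (canPass : Bool) (S : Finset V) : ℕ :=
  let moves := Finset.univ.filter (fun x => ¬ closedNbr G x ⊆ S)
  if h : moves.Nonempty then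
    if dom then
      if hc : canPass then
        min (moves.attach.inf' (by simpa using h)
              (fun x => 1 + dpVal G false canPass (S ∪ closedNbr G x.1)))
            (dpVal G false false S)
      else
        moves.attach.inf' (by simpa using h)
          (fun x => 1 + dpVal G false canPass (S ∪ closedNbr G x.1))
    else
      moves.attach.sup' (by simpa using h)
        (fun x => 1 + dpVal G true canPass (S ∪ closedNbr G x.1))
  else 0
termination_by ((Finset.univ \ S).card, if canPass then 1 else 0)
decreasing_by
  · exact Prod.Lex.left _ _ (card_compl_lt G (by simpa using (Finset.mem_filter.mp x.2).2))
  · simp only [hc, if_true]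
    exact Prod.Lex.right _ (by norm_num)
  · exact Prod.Lex.left _ _ (card_compl_lt G (by simpa using (Finset.mem_filter.mp x.2).2))
  · exact Prod.Lex.left _ _ (card_compl_lt G (by simpa using (Finset.mem_filter.mp x.2).2))

/-- The graph `G_{uv}`: obtained from `G - uv` by adding two new vertices
`u' = Sum.inr false` and `v' = Sum.inr true` together with the edges `u v'` and `v u'`. -/
def cutGraph (G : SimpleGraph V) (u v : V) : SimpleGraph (V ⊕ Bool) :=
  SimpleGraph.fromRel (fun x y =>
    match x, y with
    | Sum.inl a, Sum.inl b => G.Adj a b ∧ ¬ (a = u ∧ b = v) ∧ ¬ (a = v ∧ b = u)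
    | Sum.inl a, Sum.inr b => (b = false ∧ a = v) ∨ (b = true ∧ a = u)
    | _, _ => False)

/-- The set of vertices of `G_{uv}` declared dominated, given that `B ⊆ V(G)` is
declared dominated: `B` together with the two new vertices `u'` and `v'`. -/
def cutDom [DecidableEq V] (B : Finset V) : Finset (V ⊕ Bool) :=
  B.image Sum.inl ∪ {Sum.inr false, Sum.inr true}

/-- Disjoint union of two simple graphs. -/
def disjUnion {α β : Type*} (G : SimpleGraph α) (H : SimpleGraph β) :
    SimpleGraph (α ⊕ β) :=
  SimpleGraph.fromRel (fun x y =>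
    match x, y with
    | Sum.inl a, Sum.inl b => G.Adj a b
    | Sum.inr a, Sum.inr b => H.Adj a b
    | _, _ => False)

/-- The disjoint union of `k` paths, the `i`-th on `size i` vertices
(consecutive vertices of each `Fin (size i)` being adjacent). -/
def sigmaPathGraph (k : ℕ) (size : Fin k → ℕ) :
    SimpleGraph (Σ i : Fin k, Fin (size i)) :=
  SimpleGraph.fromRel (fun x y => x.1 = y.1 ∧ x.2.val + 1 = y.2.val)

/-- Vertex set of the three-legged spider `T_{p,q,r}`:
the center together with three legs on `4p`, `4q` and `4r` vertices. -/
abbrev SpiderV (p q r : ℕ) := Unit ⊕ (Fin (4*p) ⊕ (Fin (4*q) ⊕ Fin (4*r)))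

/-- The three-legged spider `T_{p,q,r}`, obtained from paths `P_{4p+1}`, `P_{4q+1}`,
`P_{4r+1}` by identifying one end-vertex of each into the center. In each leg,
vertex `0` is adjacent to the center, and vertices `i`, `i+1` are adjacent. -/
def spider (p q r : ℕ) : SimpleGraph (SpiderV p q r) :=
  SimpleGraph.fromRel (fun x y =>
    match x, y with
    | Sum.inl _, Sum.inr (Sum.inl i) => i.val = 0
    | Sum.inl _, Sum.inr (Sum.inr (Sum.inl i)) => i.val = 0
    | Sum.inl _, Sum.inr (Sum.inr (Sum.inr i)) => i.val = 0
    | Sum.inr (Sum.inl i), Sum.inr (Sum.inl j) => i.val + 1 = j.val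
    | Sum.inr (Sum.inr (Sum.inl i)), Sum.inr (Sum.inr (Sum.inl j)) => i.val + 1 = j.val
    | Sum.inr (Sum.inr (Sum.inr i)), Sum.inr (Sum.inr (Sum.inr j)) => i.val + 1 = j.val
    | _, _ => False)

/-- The weight `w(P'_{4q+r}) = w(P''_{4q+r}) = 2q + c_r` with
`c_0 = 0`, `c_1 = 1`, `c_2 = 3/2`, `c_3 = 7/4`, as a function of `n = 4q + r`. -/
def pathWeight (n : ℕ) : ℚ :=
  2 * (n / 4 : ℕ) +
    (if n % 4 = 0 then 0 else if n % 4 = 1 then 1 else if n % 4 = 2 then 3/2 else 7/4)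

/-!
Dominator plays the game on `G` while imagining the game on `G|u` and copying his optimal
imagined moves, so the two positions differ at most in whether `u` is dominated. The real
game can only gain a move through a Staller move that is illegal in the imagined game, i.e.
one that newly dominates just `u`. After it the real position dominates everything the
imagined one does, so by the continuation principle the rest of the real game is no longer
than the imagined game would be if Dominator, instead of Staller, moved next. Changing who
starts costs at most one move in general, and nothing for a no-minus graph.
-/

section

variable [Fintype V] {G : SimpleGraph V} {S : Finset V}

lemma moves_nonempty_iff :
    (univ.filter fun x => ¬ closedNbr G x ⊆ S).Nonempty ↔ ∃ x, ¬ closedNbr G x ⊆ S := by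
  simp only [filter_nonempty_iff, mem_univ, true_and]

lemma gameVal_eq_zero (dom : Bool) (h : ∀ x, closedNbr G x ⊆ S) : gameVal G dom S = 0 := by
  rw [gameVal.eq_1 G dom S, dif_neg]
  simpa only [moves_nonempty_iff, not_exists, not_not]

lemma gameVal_true_le {x : V} (hx : ¬ closedNbr G x ⊆ S) :
    gameVal G true S ≤ gameVal G false (S ∪ closedNbr G x) + 1 := by
  have hxm : x ∈ univ.filter fun z => ¬ closedNbr G z ⊆ S :=
    mem_filter.mpr ⟨mem_univ x, hx⟩
  rw [gameVal.eq_1 G true S, dif_pos (moves_nonempty_iff.mpr ⟨x, hx⟩), if_pos rfl]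
  have := inf'_le (fun z : {z // z ∈ univ.filter fun z => ¬ closedNbr G z ⊆ S} =>
    1 + gameVal G false (S ∪ closedNbr G z.1)) (mem_attach _ ⟨x, hxm⟩)
  exact this.trans_eq (add_comm _ _)

lemma le_gameVal_false {x : V} (hx : ¬ closedNbr G x ⊆ S) :
    gameVal G true (S ∪ closedNbr G x) + 1 ≤ gameVal G false S := by
  have hxm : x ∈ univ.filter fun z => ¬ closedNbr G z ⊆ S :=
    mem_filter.mpr ⟨mem_univ x, hx⟩
  rw [gameVal.eq_1 G false S, dif_pos (moves_nonempty_iff.mpr ⟨x, hx⟩),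
    if_neg Bool.false_ne_true]
  exact (add_comm _ _).trans_le (le_sup' (fun z => 1 + gameVal G true (S ∪ closedNbr G z.1))
    (mem_attach _ ⟨x, hxm⟩))

lemma exists_gameVal_true_eq (h : ∃ x, ¬ closedNbr G x ⊆ S) :
    ∃ x, ¬ closedNbr G x ⊆ S ∧
      gameVal G true S = gameVal G false (S ∪ closedNbr G x) + 1 := by
  have hmoves := moves_nonempty_iff.mpr h
  rw [gameVal.eq_1 G true S, dif_pos hmoves, if_pos rfl]
  obtain ⟨⟨x, hx⟩, -, hEq⟩ := exists_mem_eq_inf' (attach_nonempty_iff.mpr hmoves)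
    (fun z => 1 + gameVal G false (S ∪ closedNbr G z.1))
  exact ⟨x, (mem_filter.mp hx).2, hEq.trans (add_comm _ _)⟩

lemma exists_gameVal_false_eq (h : ∃ x, ¬ closedNbr G x ⊆ S) :
    ∃ x, ¬ closedNbr G x ⊆ S ∧
      gameVal G false S = gameVal G true (S ∪ closedNbr G x) + 1 := by
  have hmoves := moves_nonempty_iff.mpr h
  rw [gameVal.eq_1 G false S, dif_pos hmoves, if_neg Bool.false_ne_true]
  obtain ⟨⟨x, hx⟩, -, hEq⟩ := exists_mem_eq_sup' (attach_nonempty_iff.mpr hmoves)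
    (fun z => 1 + gameVal G true (S ∪ closedNbr G z.1))
  exact ⟨x, (mem_filter.mp hx).2, hEq.trans (add_comm _ _)⟩

/-- The continuation principle. -/
theorem gameVal_le_of_subset (dom : Bool) {S T : Finset V} (hST : S ⊆ T) :
    gameVal G dom T ≤ gameVal G dom S := by
  by_cases hT : ∃ z, ¬ closedNbr G z ⊆ T
  swap
  · push Not at hT
    exact (gameVal_eq_zero dom hT).trans_le (Nat.zero_le _)
  cases dom with
  | true =>
    obtain ⟨z, hzT⟩ := hT
    obtain ⟨x, -, hx⟩ := exists_gameVal_true_eq ⟨z, fun h => hzT (h.trans hST)⟩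
    -- Dominator answers with `x` if it is still legal, and with any legal move otherwise.
    obtain ⟨w, hwT, hxw⟩ :
        ∃ w, ¬ closedNbr G w ⊆ T ∧ S ∪ closedNbr G x ⊆ T ∪ closedNbr G w := by
      by_cases hxT : closedNbr G x ⊆ T
      · exact ⟨z, hzT, (union_subset hST hxT).trans subset_union_left⟩
      · exact ⟨x, hxT, union_subset_union_left hST⟩
    calc gameVal G true T ≤ gameVal G false (T ∪ closedNbr G w) + 1 := gameVal_true_le hwT
      _ ≤ gameVal G false (S ∪ closedNbr G x) + 1 := by gcongr; exact gameVal_le_of_subset _ hxw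
      _ = gameVal G true S := hx.symm
  | false =>
    obtain ⟨y, hyT, hy⟩ := exists_gameVal_false_eq hT
    have hyS : ¬ closedNbr G y ⊆ S := fun h => hyT (h.trans hST)
    calc gameVal G false T = gameVal G true (T ∪ closedNbr G y) + 1 := hy
      _ ≤ gameVal G true (S ∪ closedNbr G y) + 1 := by
        gcongr; exact gameVal_le_of_subset _ (union_subset_union_left hST)
      _ ≤ gameVal G false S := le_gameVal_false hyS
termination_by #(univ \ S)
decreasing_by all_goals exact card_compl_lt G (by assumption)

lemma gameVal_true_le_gameVal_false_add_one : gameVal G true S ≤ gameVal G false S + 1 := by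
  by_cases h : ∃ x, ¬ closedNbr G x ⊆ S
  · obtain ⟨x, hx⟩ := h
    calc gameVal G true S ≤ gameVal G false (S ∪ closedNbr G x) + 1 := gameVal_true_le hx
      _ ≤ gameVal G false S + 1 := by gcongr; exact gameVal_le_of_subset _ subset_union_left
  · push Not at h
    exact (gameVal_eq_zero true h).trans_le (Nat.zero_le _)

lemma subset_union_closedNbr_of_subset_insert {R I : Finset V} {u y : V}
    (hIR : I ⊆ insert u R) (hyI : closedNbr G y ⊆ I) (hyR : ¬ closedNbr G y ⊆ R) :
    I ⊆ R ∪ closedNbr G y := by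
  obtain ⟨v, hvy, hvR⟩ := not_subset.mp hyR
  have hvu : v = u := by simpa [hvR] using hIR (hyI hvy)
  intro z hz
  rcases mem_insert.mp (hIR hz) with rfl | hzR
  · exact mem_union_right _ (hvu ▸ hvy)
  · exact mem_union_left _ hzR

theorem gameVal_le_add_of_subset_insert {k : ℕ}
    (hk : ∀ S, gameVal G true S ≤ gameVal G false S + k) (u : V) (dom : Bool) {R I : Finset V}
    (hRI : R ⊆ I) (hIR : I ⊆ insert u R) : gameVal G dom R ≤ gameVal G dom I + (k + 1) := by
  have hstep : ∀ x, I ∪ closedNbr G x ⊆ insert u (R ∪ closedNbr G x) := fun x =>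
    (union_subset_union_left hIR).trans (insert_union u R _).subset
  by_cases hR : ∃ y, ¬ closedNbr G y ⊆ R
  swap
  · push Not at hR
    exact (gameVal_eq_zero dom hR).trans_le (Nat.zero_le _)
  cases dom with
  | true =>
    by_cases hI : ∃ x, ¬ closedNbr G x ⊆ I
    · obtain ⟨x, hxI, hx⟩ := exists_gameVal_true_eq hI
      have hxR : ¬ closedNbr G x ⊆ R := fun h => hxI (h.trans hRI)
      calc gameVal G true R ≤ gameVal G false (R ∪ closedNbr G x) + 1 := gameVal_true_le hxR
        _ ≤ gameVal G false (I ∪ closedNbr G x) + (k + 1) + 1 := by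
          gcongr
          exact gameVal_le_add_of_subset_insert hk u false
            (union_subset_union_left hRI) (hstep x)
        _ = gameVal G true I + (k + 1) := by rw [hx]; ring
    · push Not at hI
      obtain ⟨y, hyR⟩ := hR
      have hIy := subset_union_closedNbr_of_subset_insert hIR (hI y) hyR
      have hend : gameVal G false (R ∪ closedNbr G y) = 0 :=
        gameVal_eq_zero false fun z => (hI z).trans hIy
      have := gameVal_true_le hyR
      omega
  | false =>
    obtain ⟨y, hyR, hy⟩ := exists_gameVal_false_eq hR
    by_cases hyI : closedNbr G y ⊆ I
    · -- Staller's move newly dominates only `u`: the real game catches up with the imagined one.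
      have hIy := subset_union_closedNbr_of_subset_insert hIR hyI hyR
      calc gameVal G false R = gameVal G true (R ∪ closedNbr G y) + 1 := hy
        _ ≤ gameVal G true I + 1 := by gcongr; exact gameVal_le_of_subset _ hIy
        _ ≤ gameVal G false I + (k + 1) := by have := hk I; omega
    · calc gameVal G false R = gameVal G true (R ∪ closedNbr G y) + 1 := hy
        _ ≤ gameVal G true (I ∪ closedNbr G y) + (k + 1) + 1 := by
          gcongr
          exact gameVal_le_add_of_subset_insert hk u true
            (union_subset_union_left hRI) (hstep y)
        _ ≤ gameVal G false I + (k + 1) := by have := le_gameVal_false hyI; omega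
termination_by #(univ \ R)
decreasing_by all_goals exact card_compl_lt G (by assumption)

end

/-- For any vertex `u`, `γ_g(G|u) ≥ γ_g(G) − 2`; moreover if `G` is no-minus,
then `γ_g(G|u) ≥ γ_g(G) − 1`. -/
theorem gameVal_dominated_vertex_lower_bound {V : Type*} [Fintype V]
    (G : SimpleGraph V) (u : V) :
    gammaD G ≤ gameVal G true {u} + 2 ∧
    ((∀ S : Finset V, gameVal G true S ≤ gameVal G false S) →
      gammaD G ≤ gameVal G true {u} + 1) := by
  have key {k : ℕ} (hk : ∀ S, gameVal G true S ≤ gameVal G false S + k) :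
      gammaD G ≤ gameVal G true {u} + (k + 1) :=
    gameVal_le_add_of_subset_insert hk u true (empty_subset _) (by simp)
  exact ⟨key fun _ => gameVal_true_le_gameVal_false_add_one, fun hnm => key hnm⟩

end

end DomGame
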